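/- Let L be an even hyperbolic lattice with positive cone P_L, let f ∈ L be a nonzero vector with f² = 0 lying in the closure of P_L in L⊗ℝ, and let V ⊆ {v ∈ L∨ : v² < 0} satisfy condition [V1]. Then there exists α > 0 such that for every compact subset J of the horosphere {x ∈ P_L : x² = 1, ⟨x,f⟩ = √α}, only finitely many V*-chambers D satisfy D ∩ {s·(x + t·f) : x ∈ J, t ≥ 0, s > 0} ≠ ∅. -/
import Mathlib


namespace K3Aut

variable {n : ℕ}

/-- The real symmetric bilinear pairing on `L ⊗ ℝ = ℝⁿ` determined by an
integral Gram matrix `B`. -/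
def pair (B : Matrix (Fin n) (Fin n) ℤ) (x y : Fin n → ℝ) : ℝ :=
  ∑ i, ∑ j, x i * (B i j : ℝ) * y j

/-- `x` is a point of the lattice `L` (integer coordinates). -/
def isLat (x : Fin n → ℝ) : Prop := ∀ i, ∃ k : ℤ, x i = (k : ℝ)

/-- `x` has rational coordinates (a point of `L ⊗ ℚ`). -/
def isRatPt (x : Fin n → ℝ) : Prop := ∀ i, ∃ q : ℚ, x i = (q : ℝ)

/-- `x` is a point of the dual lattice `L∨ ⊆ L ⊗ ℚ`. -/
def isDual (B : Matrix (Fin n) (Fin n) ℤ) (x : Fin n → ℝ) : Prop :=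
  isRatPt x ∧ ∀ y : Fin n → ℝ, isLat y → ∃ k : ℤ, pair B x y = (k : ℝ)

/-- The Gram matrix `B` is symmetric, nondegenerate and even. -/
def IsEvenLat (B : Matrix (Fin n) (Fin n) ℤ) : Prop :=
  B.IsSymm ∧ B.det ≠ 0 ∧ ∀ i, Even (B i i)

/-- The form restricted to the subspace `W` is nondegenerate with exactly one
positive direction, i.e. of signature `(1, dim W - 1)`. -/
def IsHypOn (B : Matrix (Fin n) (Fin n) ℤ) (W : Submodule ℝ (Fin n → ℝ)) : Prop :=
  (∃ x ∈ W, 0 < pair B x x) ∧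
  (∀ x ∈ W, ∀ y ∈ W, 0 < pair B x x → 0 < pair B y y →
      pair B x x * pair B y y ≤ pair B x y ^ 2) ∧
  (∀ x ∈ W, (∀ y ∈ W, pair B x y = 0) → x = 0)

/-- The lattice is hyperbolic: rank `n > 1` and signature `(1, n-1)`. -/
def IsHyperbolic (B : Matrix (Fin n) (Fin n) ℤ) : Prop :=
  1 < n ∧ IsHypOn B ⊤

/-- `P` is a positive cone: a connected component of the set of positive-norm
vectors of `L ⊗ ℝ`. -/
def IsPosCone (B : Matrix (Fin n) (Fin n) ℤ) (P : Set (Fin n → ℝ)) : Prop :=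
  ∃ x, 0 < pair B x x ∧ P = connectedComponentIn {y | 0 < pair B y y} x

/-- The hyperplane `(v)⊥` of `P`. -/
def perp (B : Matrix (Fin n) (Fin n) ℤ) (P : Set (Fin n → ℝ)) (v : Fin n → ℝ) :
    Set (Fin n → ℝ) := {x ∈ P | pair B x v = 0}

/-- `V ⊆ {v ∈ L∨ : v² < 0}`. -/
def DualNeg (B : Matrix (Fin n) (Fin n) ℤ) (V : Set (Fin n → ℝ)) : Prop :=
  ∀ v ∈ V, isDual B v ∧ pair B v v < 0

/-- Condition [V1]: the norms of the vectors of `V` are bounded. -/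
def CondV1 (B : Matrix (Fin n) (Fin n) ℤ) (V : Set (Fin n → ℝ)) : Prop :=
  ∃ c : ℝ, 0 < c ∧ ∀ v ∈ V, -pair B v v < c

/-- The cone `Σ_L(Δ)`. -/
def SigmaCone (B : Matrix (Fin n) (Fin n) ℤ) (Δ : Set (Fin n → ℝ)) :
    Set (Fin n → ℝ) :=
  {x | ∀ v ∈ Δ, 0 ≤ pair B x v}

/-- `D` is a `V*`-chamber: the closure in `P` of a connected component of the
complement in `P` of the hyperplanes `(v)⊥`, `v ∈ V`. -/
def IsChamber (B : Matrix (Fin n) (Fin n) ℤ) (P V D : Set (Fin n → ℝ)) : Prop :=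
  ∃ x ∈ P, (∀ v ∈ V, pair B x v ≠ 0) ∧
    D = closure (connectedComponentIn {y ∈ P | ∀ v ∈ V, pair B y v ≠ 0} x) ∩ P

/-- `Δ` is a defining set of the chamber `D`. -/
def IsDefSet (B : Matrix (Fin n) (Fin n) ℤ) (P Δ D : Set (Fin n → ℝ)) : Prop :=
  (∀ v ∈ Δ, isDual B v ∧ pair B v v < 0) ∧ D = SigmaCone B Δ ∩ P

/-- Condition [V3]: every `V*`-chamber has a finite defining set. -/
def CondV3 (B : Matrix (Fin n) (Fin n) ℤ) (P V : Set (Fin n → ℝ)) : Prop :=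
  ∀ D, IsChamber B P V D → ∃ Δ : Set (Fin n → ℝ), Δ.Finite ∧ IsDefSet B P Δ D

/-- Condition [V4]: every boundary point of a `V*`-chamber is rational, i.e.
every nonzero norm-zero vector of the closure of a chamber is a positive real
multiple of a rational vector. -/
def CondV4 (B : Matrix (Fin n) (Fin n) ℤ) (P V : Set (Fin n → ℝ)) : Prop :=
  ∀ D, IsChamber B P V D → ∀ x ∈ closure D, x ≠ 0 → pair B x x = 0 →
    ∃ t : ℝ, 0 < t ∧ ∃ y, isRatPt y ∧ x = t • y

/-- The action of `GL_n(ℤ)` on `L ⊗ ℝ`. -/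
def act (g : (Matrix (Fin n) (Fin n) ℤ)ˣ) (x : Fin n → ℝ) : Fin n → ℝ :=
  ((g : Matrix (Fin n) (Fin n) ℤ).map ((↑) : ℤ → ℝ)).mulVec x

/-- `g` is an isometry of `L` preserving the positive cone `P`,
i.e. an element of `O⁺(L)`. -/
def InOPlus (B : Matrix (Fin n) (Fin n) ℤ) (P : Set (Fin n → ℝ))
    (g : (Matrix (Fin n) (Fin n) ℤ)ˣ) : Prop :=
  (g : Matrix (Fin n) (Fin n) ℤ).transpose * B * (g : Matrix (Fin n) (Fin n) ℤ) = B ∧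
    act g '' P = P

/-- Condition [V2]: `V` is invariant under the action of `G`. -/
def CondV2 (G : Subgroup ((Matrix (Fin n) (Fin n) ℤ)ˣ)) (V : Set (Fin n → ℝ)) : Prop :=
  ∀ g ∈ G, ∀ v ∈ V, act g v ∈ V

/-- `(v)⊥` is a wall of the chamber `D`: it is disjoint from the interior of `D`
and `(v)⊥ ∩ D` contains a nonempty open subset of `(v)⊥`. -/
def IsWall (B : Matrix (Fin n) (Fin n) ℤ) (P : Set (Fin n → ℝ)) (v : Fin n → ℝ)
    (D : Set (Fin n → ℝ)) : Prop :=
  pair B v v < 0 ∧ perp B P v ∩ interior D = ∅ ∧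
  ∃ W : Set (Fin n → ℝ), IsOpen W ∧ (W ∩ perp B P v).Nonempty ∧ W ∩ perp B P v ⊆ D

/-- `D'` is the chamber adjacent to `D` across the wall `(v)⊥`. -/
def IsAdjacent (B : Matrix (Fin n) (Fin n) ℤ) (P V : Set (Fin n → ℝ))
    (D : Set (Fin n → ℝ)) (v : Fin n → ℝ) (D' : Set (Fin n → ℝ)) : Prop :=
  IsChamber B P V D' ∧ D' ≠ D ∧
  ∃ W : Set (Fin n → ℝ), IsOpen W ∧ (W ∩ perp B P v).Nonempty ∧
    W ∩ perp B P v ⊆ D ∩ D'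

/-- `S` is (the set of real points of) a primitive sublattice of `L`. -/
def IsPrimSub (S : Submodule ℤ (Fin n → ℝ)) : Prop :=
  (∀ x ∈ S, isLat x) ∧
  ∀ x : Fin n → ℝ, isLat x → ∀ k : ℤ, k ≠ 0 → (k : ℝ) • x ∈ S → x ∈ S

/-- `xS` is the orthogonal projection of `x` to `S ⊗ ℚ`. -/
def IsProjS (B : Matrix (Fin n) (Fin n) ℤ) (S : Submodule ℤ (Fin n → ℝ))
    (xS x : Fin n → ℝ) : Prop :=
  xS ∈ Submodule.span ℚ (S : Set (Fin n → ℝ)) ∧ ∀ s ∈ S, pair B (x - xS) s = 0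

/-- The orthogonal complement `R = S⊥ ∩ L` of `S` in `L`. -/
def orthCompl (B : Matrix (Fin n) (Fin n) ℤ) (S : Submodule ℤ (Fin n → ℝ)) :
    Set (Fin n → ℝ) :=
  {x | isLat x ∧ ∀ s ∈ S, pair B x s = 0}

/-- `P` is a positive cone of the subspace `W`. -/
def IsPosConeIn (B : Matrix (Fin n) (Fin n) ℤ) (W : Set (Fin n → ℝ))
    (P : Set (Fin n → ℝ)) : Prop :=
  ∃ x ∈ W, 0 < pair B x x ∧ P = connectedComponentIn {y ∈ W | 0 < pair B y y} x



section Aux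
variable {B : Matrix (Fin n) (Fin n) ℤ}

lemma pair_add_left (x y z : Fin n → ℝ) :
    pair B (x + y) z = pair B x z + pair B y z := by
  simp [pair, add_mul, Finset.sum_add_distrib]

lemma pair_add_right (x y z : Fin n → ℝ) :
    pair B x (y + z) = pair B x y + pair B x z := by
  simp [pair, mul_add, Finset.sum_add_distrib]

lemma pair_smul_left (s : ℝ) (x y : Fin n → ℝ) :
    pair B (s • x) y = s * pair B x y := by
  simp [pair, Finset.mul_sum]; ring_nf

lemma pair_smul_right (s : ℝ) (x y : Fin n → ℝ) :
    pair B x (s • y) = s * pair B x y := by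
  simp [pair, Finset.mul_sum]; ring_nf
  exact Finset.sum_congr rfl fun i _ => Finset.sum_congr rfl fun j _ => by ring

lemma pair_sub_left (x y z : Fin n → ℝ) :
    pair B (x - y) z = pair B x z - pair B y z := by
  simp [pair, sub_mul, Finset.sum_sub_distrib]

lemma pair_sub_right (x y z : Fin n → ℝ) :
    pair B x (y - z) = pair B x y - pair B x z := by
  simp [pair, mul_sub, Finset.sum_sub_distrib]

lemma continuous_pair_left (v : Fin n → ℝ) : Continuous fun x => pair B x v := by
  unfold pair
  exact continuous_finset_sum _ fun i _ => continuous_finset_sum _ fun j _ =>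
    ((continuous_apply i).mul continuous_const).mul continuous_const

lemma continuous_pair₂ : Continuous fun p : (Fin n → ℝ) × (Fin n → ℝ) => pair B p.1 p.2 := by
  unfold pair
  exact continuous_finset_sum _ fun i _ => continuous_finset_sum _ fun j _ =>
    (((continuous_apply i).comp continuous_fst).mul continuous_const).mul
      ((continuous_apply j).comp continuous_snd)

lemma continuous_pair_self : Continuous fun x : Fin n → ℝ => pair B x x :=
  continuous_pair₂.comp (continuous_id.prodMk continuous_id)

lemma continuous_pair_right (v : Fin n → ℝ) : Continuous fun x => pair B v x :=
  continuous_pair₂.comp (continuous_const.prodMk continuous_id)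

lemma pair_comm (hs : B.IsSymm) (x y : Fin n → ℝ) : pair B x y = pair B y x := by
  unfold pair
  rw [Finset.sum_comm]
  refine Finset.sum_congr rfl fun j _ => Finset.sum_congr rfl fun i _ => ?_
  rw [(hs.apply i j).symm]; ring

section Hyp

def HCS (B : Matrix (Fin n) (Fin n) ℤ) : Prop :=
  ∀ x y : Fin n → ℝ, 0 < pair B x x → 0 < pair B y y →
      pair B x x * pair B y y ≤ pair B x y ^ 2

def HND (B : Matrix (Fin n) (Fin n) ℤ) : Prop :=
  ∀ x : Fin n → ℝ, (∀ y, pair B x y = 0) → x = 0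

/-- Reverse Cauchy–Schwarz for all `x`. -/
lemma revCS (hCS : HCS B) {y : Fin n → ℝ} (hy : 0 < pair B y y) (x : Fin n → ℝ) :
    pair B x x * pair B y y ≤ pair B x y ^ 2 := by
  rcases lt_or_ge 0 (pair B x x) with h | h
  · exact hCS x y h hy
  · have : pair B x x * pair B y y ≤ 0 := mul_nonpos_of_nonpos_of_nonneg h hy.le
    exact this.trans (sq_nonneg _)

/-- A nonzero vector orthogonal to a positive vector cannot be isotropic. -/
lemma claimA (hs : B.IsSymm) (hCS : HCS B) (hND : HND B) {y u : Fin n → ℝ} (hy : 0 < pair B y y) (hperp : pair B u y = 0)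
    (hu : pair B u u = 0) : u = 0 := by
  -- q x := pair x x * pair y y - (pair x y)^2 ≤ 0 everywhere
  have hq : ∀ x, pair B x x * pair B y y - pair B x y ^ 2 ≤ 0 := fun x =>
    sub_nonpos.mpr (revCS hCS hy x)
  -- expand q (u + t z)
  have key : ∀ z : Fin n → ℝ, pair B u z * pair B y y - pair B u y * pair B z y = 0 := by
    intro z
    set A := pair B u z * pair B y y - pair B u y * pair B z y with hA
    set C := pair B z z * pair B y y - pair B z y ^ 2 with hC
    have hCle : C ≤ 0 := hq z
    have expand : ∀ t : ℝ,
        pair B (u + t • z) (u + t • z) * pair B y y - pair B (u + t • z) y ^ 2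
          = 2 * t * A + t ^ 2 * C := by
      intro t
      simp only [pair_add_left, pair_add_right, pair_smul_left, pair_smul_right]
      have h1 : pair B z u = pair B u z := pair_comm hs z u
      simp only [hA, hC, h1, hu, hperp]; ring
    by_contra hA0
    have ht := hq (u + ((A / (1 - C)) • z))
    rw [expand (A / (1 - C))] at ht
    have h1C : (0:ℝ) < 1 - C := by linarith
    have : 2 * (A / (1 - C)) * A + (A / (1 - C)) ^ 2 * C
        = A ^ 2 * (2 - C) / (1 - C) ^ 2 := by
      field_simp; ring
    rw [this] at ht
    have hA2 : 0 < A ^ 2 := by positivity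
    have h2C : (0:ℝ) < 2 - C := by linarith
    have : 0 < A ^ 2 * (2 - C) / (1 - C) ^ 2 :=
      div_pos (mul_pos hA2 h2C) (pow_pos h1C 2)
    linarith
  apply hND
  intro z
  have := key z
  rw [hperp] at this
  have hyy := hy.ne'
  have : pair B u z * pair B y y = 0 := by linarith
  rcases mul_eq_zero.mp this with h | h
  · exact h
  · exact absurd h hyy

/-- Negative definiteness on the orthogonal complement of a positive vector. -/
lemma negdef (hs : B.IsSymm) (hCS : HCS B) (hND : HND B) {y u : Fin n → ℝ} (hy : 0 < pair B y y) (hperp : pair B u y = 0)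
    (hu : u ≠ 0) : pair B u u < 0 := by
  have h := revCS hCS hy u
  rw [hperp] at h
  have h3 : pair B u u ≤ 0 := by nlinarith
  rcases h3.lt_or_eq with h4 | h4
  · exact h4
  · exact absurd (claimA hs hCS hND hy hperp h4) hu


/-- Cauchy–Schwarz on the negative (semi)definite complement of a positive vector. -/
lemma subCS (hCS : HCS B) {y u w : Fin n → ℝ} (hy : 0 < pair B y y)
    (hu : pair B u y = 0) (hw : pair B w y = 0) (hs : B.IsSymm) :
    pair B u w ^ 2 ≤ pair B u u * pair B w w := by
  have key : ∀ t : ℝ, pair B u u + 2 * t * pair B u w + t ^ 2 * pair B w w ≤ 0 := by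
    intro t
    have hperp : pair B (u + t • w) y = 0 := by
      rw [pair_add_left, pair_smul_left, hu, hw]; ring
    have h := revCS hCS hy (u + t • w)
    rw [hperp] at h
    have hle : pair B (u + t • w) (u + t • w) * pair B y y ≤ 0 := by simpa using h
    have h2 : pair B (u + t • w) (u + t • w) ≤ 0 := by nlinarith
    have hexp : pair B (u + t • w) (u + t • w)
        = pair B u u + 2 * t * pair B u w + t ^ 2 * pair B w w := by
      simp only [pair_add_left, pair_add_right, pair_smul_left, pair_smul_right]
      rw [pair_comm hs w u]; ring
    linarith [hexp ▸ h2]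
  have hdisc := discrim_le_zero_of_nonpos
    (a := pair B w w) (b := 2 * pair B u w) (c := pair B u u)
    (fun t => by nlinarith [key t])
  rw [discrim] at hdisc
  nlinarith

/-- Two vectors on the positive side pair positively. -/
lemma posPair (hs : B.IsSymm) (hCS : HCS B) (hND : HND B) {x₀ y z : Fin n → ℝ}
    (hc₀ : 0 < pair B x₀ x₀) (hy2 : 0 < pair B y y) (hyx : 0 < pair B y x₀)
    (hz2 : 0 ≤ pair B z z) (hzx : 0 ≤ pair B z x₀) (hz0 : z ≠ 0) :
    0 < pair B y z := by
  set c₀ := pair B x₀ x₀ with hc₀def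
  have hzxpos : 0 < pair B z x₀ := by
    rcases hzx.lt_or_eq with h | h
    · exact h
    · exfalso
      have : pair B z z < 0 := negdef hs hCS hND hc₀ h.symm hz0
      linarith
  set μ := pair B y x₀ / c₀ with hμdef
  set l := pair B z x₀ / c₀ with hldef
  have hμ : 0 < μ := div_pos hyx hc₀
  have hl : 0 < l := div_pos hzxpos hc₀
  have hμc : μ * c₀ = pair B y x₀ := by
    rw [hμdef]; exact div_mul_cancel₀ _ hc₀.ne'
  have hlc : l * c₀ = pair B z x₀ := by
    rw [hldef]; exact div_mul_cancel₀ _ hc₀.ne'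
  set u := y - μ • x₀ with hudef
  set w := z - l • x₀ with hwdef
  have hux : pair B u x₀ = 0 := by
    rw [hudef, pair_sub_left, pair_smul_left]; rw [← hμc]; ring
  have hwx : pair B w x₀ = 0 := by
    rw [hwdef, pair_sub_left, pair_smul_left]; rw [← hlc]; ring
  have huu : pair B u u = pair B y y - μ ^ 2 * c₀ := by
    rw [hudef]
    simp only [pair_sub_left, pair_sub_right, pair_smul_left, pair_smul_right]
    rw [pair_comm hs x₀ y, ← hμc]; ring
  have hww : pair B w w = pair B z z - l ^ 2 * c₀ := by
    rw [hwdef]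
    simp only [pair_sub_left, pair_sub_right, pair_smul_left, pair_smul_right]
    rw [pair_comm hs x₀ z, ← hlc]; ring
  have hcs := subCS hCS hc₀ hux hwx hs
  have huneg : pair B u u ≤ 0 := by
    have := revCS hCS hc₀ u
    rw [hux] at this
    nlinarith
  have hwneg : pair B w w ≤ 0 := by
    have := revCS hCS hc₀ w
    rw [hwx] at this
    nlinarith
  have hyz : pair B y z = μ * l * c₀ + pair B u w := by
    have hy' : y = u + μ • x₀ := by rw [hudef]; abel
    have hz' : z = w + l • x₀ := by rw [hwdef]; abel
    rw [hy', hz']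
    simp only [pair_add_left, pair_add_right, pair_smul_left, pair_smul_right]
    rw [pair_comm hs x₀ w, hwx, hux]
    ring
  -- |pair u w| < μ l c₀
  have h1 : - (pair B u u) < μ ^ 2 * c₀ := by rw [huu]; linarith
  have h2 : - (pair B w w) ≤ l ^ 2 * c₀ := by rw [hww]; linarith
  have hA : 0 < μ ^ 2 * c₀ := by positivity
  have hBp : 0 < l ^ 2 * c₀ := by positivity
  have hp : (-pair B u u) * (-pair B w w) < (μ ^ 2 * c₀) * (l ^ 2 * c₀) := by
    rcases (neg_nonneg.mpr hwneg).lt_or_eq with hww0 | hww0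
    · calc (-pair B u u) * (-pair B w w) < (μ ^ 2 * c₀) * (-pair B w w) :=
            mul_lt_mul_of_pos_right h1 hww0
        _ ≤ (μ ^ 2 * c₀) * (l ^ 2 * c₀) := mul_le_mul_of_nonneg_left h2 hA.le
    · rw [← hww0, mul_zero]; exact mul_pos hA hBp
  have hsq : pair B u w ^ 2 < (μ * l * c₀) ^ 2 := by nlinarith [hp, hcs]
  have habs : -(μ * l * c₀) < pair B u w := by
    nlinarith [sq_nonneg (pair B u w + μ * l * c₀), mul_pos (mul_pos hμ hl) hc₀]
  rw [hyz]; linarith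

/-- Characterisation of the positive cone. -/
lemma posCone_eq (hs : B.IsSymm) (hCS : HCS B) (hND : HND B) {x₀ : Fin n → ℝ}
    (hc₀ : 0 < pair B x₀ x₀) :
    connectedComponentIn {y : Fin n → ℝ | 0 < pair B y y} x₀
      = {y | 0 < pair B y y ∧ 0 < pair B y x₀} := by
  set Pos : Set (Fin n → ℝ) := {y | 0 < pair B y y ∧ 0 < pair B y x₀} with hPos
  have hx₀Pos : x₀ ∈ Pos := ⟨hc₀, hc₀⟩
  have hconv : Convex ℝ Pos := by
    intro y hy z hz a b ha hb hab
    obtain ⟨hy2, hyx⟩ := hy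
    obtain ⟨hz2, hzx⟩ := hz
    have hz0 : z ≠ 0 := by
      intro h; rw [h] at hz2; simp [pair] at hz2
    have hyz : 0 < pair B y z := posPair hs hCS hND hc₀ hy2 hyx hz2.le hzx.le hz0
    have hcombo2 : pair B (a • y + b • z) (a • y + b • z)
        = a ^ 2 * pair B y y + 2 * a * b * pair B y z + b ^ 2 * pair B z z := by
      simp only [pair_add_left, pair_add_right, pair_smul_left, pair_smul_right]
      rw [pair_comm hs z y]; ring
    have hcombox : pair B (a • y + b • z) x₀ = a * pair B y x₀ + b * pair B z x₀ := by
      simp only [pair_add_left, pair_smul_left]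
    constructor
    · show 0 < pair B (a • y + b • z) (a • y + b • z)
      rw [hcombo2]
      rcases ha.lt_or_eq with ha' | ha'
      · have : 0 < a ^ 2 * pair B y y := by positivity
        nlinarith [mul_nonneg (mul_nonneg ha hb) hyz.le, mul_nonneg (mul_nonneg hb hb) hz2.le]
      · rw [← ha'] at hab ⊢
        simp at hab
        rw [hab]; simpa using hz2
    · show 0 < pair B (a • y + b • z) x₀
      rw [hcombox]
      rcases ha.lt_or_eq with ha' | ha'
      · have : 0 < a * pair B y x₀ := mul_pos ha' hyx
        nlinarith [mul_nonneg hb hzx.le]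
      · rw [← ha'] at hab ⊢
        simp at hab
        rw [hab]; simpa using hzx
  apply le_antisymm
  · -- component ⊆ Pos
    have hsub : connectedComponentIn {y : Fin n → ℝ | 0 < pair B y y} x₀
        ⊆ {y | 0 < pair B y x₀} ∪ {y | pair B y x₀ < 0} := by
      intro y hy
      have hy2 : 0 < pair B y y :=
        connectedComponentIn_subset {y : Fin n → ℝ | 0 < pair B y y} x₀ hy
      have := revCS hCS hc₀ y
      have hne : pair B y x₀ ≠ 0 := by
        intro h0; rw [h0] at this; nlinarith
      rcases hne.lt_or_gt with h | h
      · exact Or.inr h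
      · exact Or.inl h
    have hopen1 : IsOpen {y : Fin n → ℝ | 0 < pair B y x₀} :=
      isOpen_lt continuous_const (continuous_pair_left x₀)
    have hopen2 : IsOpen {y : Fin n → ℝ | pair B y x₀ < 0} :=
      isOpen_lt (continuous_pair_left x₀) continuous_const
    have hdisj : Disjoint {y : Fin n → ℝ | 0 < pair B y x₀} {y | pair B y x₀ < 0} := by
      rw [Set.disjoint_left]
      intro y h1 h2
      have h1' : 0 < pair B y x₀ := h1
      have h2' : pair B y x₀ < 0 := h2
      linarith
    rcases isPreconnected_connectedComponentIn.subset_or_subset hopen1 hopen2 hdisj hsub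
      with h | h
    · intro y hy
      exact ⟨connectedComponentIn_subset {y : Fin n → ℝ | 0 < pair B y y} x₀ hy, h hy⟩
    · exfalso
      have h0 := h (mem_connectedComponentIn
        (show x₀ ∈ {y : Fin n → ℝ | 0 < pair B y y} from hc₀))
      have : pair B x₀ x₀ < 0 := h0
      linarith
  · exact hconv.isPreconnected.subset_connectedComponentIn hx₀Pos
      (fun y hy => hy.1)

/-- The positive cone can be cut out by the isotropic vector `f` as well. -/
lemma posCone_eq_f (hs : B.IsSymm) (hCS : HCS B) (hND : HND B) {x₀ f : Fin n → ℝ}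
    (hc₀ : 0 < pair B x₀ x₀) (hf0 : f ≠ 0) (hff : pair B f f = 0)
    (hfx : 0 ≤ pair B f x₀) :
    {y : Fin n → ℝ | 0 < pair B y y ∧ 0 < pair B y x₀}
      = {y | 0 < pair B y y ∧ 0 < pair B y f} := by
  ext y
  simp only [Set.mem_setOf_eq]
  constructor
  · rintro ⟨hy2, hyx⟩
    exact ⟨hy2, posPair hs hCS hND hc₀ hy2 hyx (le_of_eq hff.symm) hfx hf0⟩
  · rintro ⟨hy2, hyf⟩
    refine ⟨hy2, ?_⟩
    have hne : pair B y x₀ ≠ 0 := by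
      have := revCS hCS hc₀ y
      intro h0; rw [h0] at this; nlinarith
    rcases hne.lt_or_gt with h | h
    · exfalso
      have hy2' : 0 < pair B ((-1 : ℝ) • y) ((-1 : ℝ) • y) := by
        rw [pair_smul_left, pair_smul_right]; simpa using hy2
      have hyx' : 0 < pair B ((-1 : ℝ) • y) x₀ := by
        rw [pair_smul_left]; simpa using h
      have := posPair hs hCS hND hc₀ hy2' hyx' (le_of_eq hff.symm) hfx hf0
      rw [pair_smul_left] at this
      nlinarith
    · exact h

/-- The horoball `⟨y,f⟩² ≤ (1/c)·y²` meets no hyperplane `(v)⊥` with `⟨v,f⟩ ≠ 0`. -/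
lemma horo_wall (hs : B.IsSymm) (hCS : HCS B) (hND : HND B) {f y v : Fin n → ℝ}
    (hff : pair B f f = 0) {c : ℝ} (hc : 0 < c)
    (hy2 : 0 < pair B y y) (hyf : 0 < pair B y f)
    (hint : ∃ k : ℤ, pair B v f = (k : ℝ)) (hvc : - pair B v v < c)
    (hhoro : c * pair B y f ^ 2 ≤ pair B y y) (hperp : pair B y v = 0) :
    pair B v f = 0 := by
  by_contra hvf
  obtain ⟨k, hk⟩ := hint
  have hk0 : k ≠ 0 := by rintro rfl; simp at hk; exact hvf hk
  have h1le : (1 : ℝ) ≤ pair B v f ^ 2 := by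
    rw [hk]
    have : (1 : ℤ) ≤ k ^ 2 := by
      rcases lt_or_gt_of_ne hk0 with h | h <;> nlinarith
    calc (1:ℝ) = ((1:ℤ):ℝ) := by norm_num
      _ ≤ ((k^2 : ℤ) : ℝ) := by exact_mod_cast this
      _ = (k:ℝ)^2 := by push_cast; ring
  set d := pair B y f with hd_def
  have hd : 0 < d := hyf
  set a := pair B v f / d with ha_def
  set b := -(a * pair B y y) / d with hb_def
  have had : a * d = pair B v f := by rw [ha_def]; field_simp
  have hbd : b * d = -(a * pair B y y) := by rw [hb_def]; field_simp
  set w := v - a • y - b • f with hw_def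
  have hv' : v = a • y + b • f + w := by rw [hw_def]; abel
  have hwy : pair B w y = 0 := by
    rw [hw_def]
    simp only [pair_sub_left, pair_smul_left]
    rw [pair_comm hs v y, hperp, pair_comm hs f y, ← hd_def, hbd]
    ring
  have hwf : pair B w f = 0 := by
    rw [hw_def]
    simp only [pair_sub_left, pair_smul_left]
    rw [hff, ← hd_def, ← had]
    ring
  have hww : pair B w w ≤ 0 := by
    have := revCS hCS hy2 w
    rw [hwy] at this
    nlinarith
  have hexp : pair B v v = -(a ^ 2 * pair B y y) + pair B w w := by
    conv_lhs => rw [hv']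
    simp only [pair_add_left, pair_add_right, pair_smul_left, pair_smul_right]
    rw [pair_comm hs f y, pair_comm hs y w, pair_comm hs f w, ← hd_def, hff, hwy, hwf]
    linear_combination (2 * a) * hbd
  have h2 : pair B y y ≤ pair B v f ^ 2 * pair B y y := by nlinarith
  have h3 : c * d ^ 2 ≤ (a ^ 2 * pair B y y) * d ^ 2 := by
    have h1 : a ^ 2 * pair B y y * d ^ 2 = pair B v f ^ 2 * pair B y y := by
      rw [← had]; ring
    rw [h1]; linarith
  have h4 : c ≤ a ^ 2 * pair B y y :=
    le_of_mul_le_mul_right (by linarith [h3] : c * d ^ 2 ≤ (a ^ 2 * pair B y y) * d ^ 2)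
      (by positivity)
  linarith

section Chambers

variable {P V : Set (Fin n → ℝ)}

/-- Scale invariance of connected components of the chamber complement. -/
lemma smul_mem_comp (hPsc : ∀ s : ℝ, 0 < s → ∀ y ∈ P, s • y ∈ P)
    {s : ℝ} (hspos : 0 < s) {x₁ z : Fin n → ℝ}
    (hz : z ∈ connectedComponentIn {y ∈ P | ∀ v ∈ V, pair B y v ≠ 0} x₁) :
    s • z ∈ connectedComponentIn {y ∈ P | ∀ v ∈ V, pair B y v ≠ 0} x₁ := by
  set SS := {y ∈ P | ∀ v ∈ V, pair B y v ≠ 0} with hSS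
  have hzS : z ∈ SS := connectedComponentIn_subset _ _ hz
  have hseg : ((fun τ : ℝ => (1 - τ + τ * s) • z) '' Set.Icc 0 1) ⊆ SS := by
    rintro - ⟨τ, ⟨hτ0, hτ1⟩, rfl⟩
    have hco : 0 < 1 - τ + τ * s := by
      rcases le_or_gt 1 s with h | h
      · nlinarith [mul_le_mul_of_nonneg_left h hτ0]
      · nlinarith [mul_le_mul_of_nonneg_right hτ1 (by linarith : (0:ℝ) ≤ 1 - s)]
    refine ⟨hPsc _ hco z hzS.1, fun v hv => ?_⟩
    rw [pair_smul_left]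
    exact mul_ne_zero hco.ne' (hzS.2 v hv)
  have hpre : IsPreconnected ((fun τ : ℝ => (1 - τ + τ * s) • z) '' Set.Icc 0 1) := by
    apply IsPreconnected.image isPreconnected_Icc
    apply Continuous.continuousOn
    exact ((continuous_const.sub continuous_id).add (continuous_id.mul continuous_const)).smul
      continuous_const
  have hz0 : z ∈ (fun τ : ℝ => (1 - τ + τ * s) • z) '' Set.Icc 0 1 :=
    ⟨0, by norm_num, by norm_num⟩
  have hsub : (fun τ : ℝ => (1 - τ + τ * s) • z) '' Set.Icc 0 1
      ⊆ connectedComponentIn SS z :=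
    hpre.subset_connectedComponentIn hz0 hseg
  have heq := connectedComponentIn_eq hz
  rw [← heq] at hsub
  have : s • z ∈ (fun τ : ℝ => (1 - τ + τ * s) • z) '' Set.Icc 0 1 :=
    ⟨1, by norm_num, by norm_num⟩
  exact hsub this

lemma smul_mem_closure_comp (hPsc : ∀ s : ℝ, 0 < s → ∀ y ∈ P, s • y ∈ P)
    {s : ℝ} (hspos : 0 < s) {x₁ z : Fin n → ℝ}
    (hz : z ∈ closure (connectedComponentIn {y ∈ P | ∀ v ∈ V, pair B y v ≠ 0} x₁)) :
    s • z ∈ closure (connectedComponentIn {y ∈ P | ∀ v ∈ V, pair B y v ≠ 0} x₁) := by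
  set C := connectedComponentIn {y ∈ P | ∀ v ∈ V, pair B y v ≠ 0} x₁
  have h1 : s • z ∈ closure ((s • ·) '' C) :=
    mem_closure_image (continuous_const_smul s).continuousAt hz
  refine closure_mono ?_ h1
  rintro - ⟨w, hw, rfl⟩
  exact smul_mem_comp hPsc hspos hw


/-- Key lemma: if a ray point `x + t f` lies in the closure of a chamber
component, then so does `x` itself, provided `x` lies on the horosphere. -/
lemma ray_into_closure (hs : B.IsSymm) (hCS : HCS B) (hND : HND B)
    {f : Fin n → ℝ} (hff : pair B f f = 0)
    {c : ℝ} (hc : 0 < c)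
    (hVd : ∀ v ∈ V, (∃ k : ℤ, pair B v f = (k : ℝ)) ∧ - pair B v v < c)
    (hP : P = {y : Fin n → ℝ | 0 < pair B y y ∧ 0 < pair B y f})
    {x₁ x : Fin n → ℝ} {t : ℝ} (ht : 0 ≤ t)
    (hx2 : pair B x x = 1) (hxf : pair B x f ^ 2 = 1 / (2 * c)) (hxf0 : 0 < pair B x f)
    (hmem : x + t • f ∈ closure (connectedComponentIn {y ∈ P | ∀ v ∈ V, pair B y v ≠ 0} x₁)) :
    x ∈ closure (connectedComponentIn {y ∈ P | ∀ v ∈ V, pair B y v ≠ 0} x₁) := by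
  set SS := {y ∈ P | ∀ v ∈ V, pair B y v ≠ 0} with hSSdef
  set C := connectedComponentIn SS x₁ with hCdef
  set Hop : Set (Fin n → ℝ) :=
    {z | (0 < pair B z z ∧ 0 < pair B z f) ∧ pair B z f ^ 2 < (1 / c) * pair B z z}
    with hHop
  have hHopOpen : IsOpen Hop := by
    apply IsOpen.inter
    · exact (isOpen_lt continuous_const continuous_pair_self).inter
        (isOpen_lt continuous_const (continuous_pair_left f))
    · exact isOpen_lt (by continuity) (continuous_const.mul continuous_pair_self)
  have hxHop : x ∈ Hop := by
    refine ⟨⟨by rw [hx2]; norm_num, hxf0⟩, ?_⟩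
    · rw [hxf, hx2]
      rw [mul_one]
      have : (0:ℝ) < 1 / c := by positivity
      rw [div_lt_div_iff₀ (by positivity) (by positivity)]
      nlinarith
  rw [mem_closure_iff]
  intro O hO hxO
  set U := (fun w => w - t • f) ⁻¹' (O ∩ Hop) with hU
  have hUopen : IsOpen U := (hO.inter hHopOpen).preimage (continuous_id.sub continuous_const)
  have hyU : x + t • f ∈ U := by
    have : (x + t • f) - t • f = x := by abel
    simp only [hU, Set.mem_preimage, this]
    exact ⟨hxO, hxHop⟩
  obtain ⟨z, hzU, hzC⟩ := (mem_closure_iff.mp hmem) U hUopen hyU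
  obtain ⟨hzO, hzHop⟩ : z - t • f ∈ O ∩ Hop := hzU
  -- basic facts about z
  have hzSS : z ∈ SS := connectedComponentIn_subset _ _ hzC
  have hzP : z ∈ P := hzSS.1
  have hzv : ∀ v ∈ V, pair B z v ≠ 0 := hzSS.2
  have hz2 : 0 < pair B z z := by rw [hP] at hzP; exact hzP.1
  have hzf : 0 < pair B z f := by rw [hP] at hzP; exact hzP.2
  -- the backward segment stays in SS
  have hnorm : ∀ τ : ℝ, pair B (z - τ • f) (z - τ • f) = pair B z z - 2 * τ * pair B z f := by
    intro τ
    simp only [pair_sub_left, pair_sub_right, pair_smul_left, pair_smul_right]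
    rw [pair_comm hs f z, hff]; ring
  have hfconst : ∀ τ : ℝ, pair B (z - τ • f) f = pair B z f := by
    intro τ
    rw [pair_sub_left, pair_smul_left, hff]; ring
  have hseg : ((fun τ : ℝ => z - (τ * t) • f) '' Set.Icc 0 1) ⊆ SS := by
    rintro - ⟨τ, ⟨hτ0, hτ1⟩, rfl⟩
    set z' := z - (τ * t) • f with hz'
    have hz'2 : pair B (z - t • f) (z - t • f) ≤ pair B z' z' := by
      rw [hnorm, hnorm]
      have : τ * t ≤ t := by nlinarith
      nlinarith
    have hztf2 : 0 < pair B (z - t • f) (z - t • f) := hzHop.1.1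
    have hz'pos : 0 < pair B z' z' := lt_of_lt_of_le hztf2 hz'2
    have hz'f : pair B z' f = pair B z f := hfconst _
    have hz'horo : pair B z' f ^ 2 < (1 / c) * pair B z' z' := by
      rw [hz'f]
      have h1 : pair B (z - t • f) f = pair B z f := hfconst _
      have h2 := hzHop.2
      rw [h1] at h2
      calc pair B z f ^ 2 < (1 / c) * pair B (z - t • f) (z - t • f) := h2
        _ ≤ (1 / c) * pair B z' z' := by
            apply mul_le_mul_of_nonneg_left hz'2 (by positivity)
    have hz'P : z' ∈ P := by
      rw [hP]
      exact ⟨hz'pos, by rw [hz'f]; exact hzf⟩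
    refine ⟨hz'P, fun v hv => ?_⟩
    show pair B z' v ≠ 0
    rcases eq_or_ne (pair B v f) 0 with hvf | hvf
    · rw [hz', pair_sub_left, pair_smul_left, pair_comm hs f v, hvf]
      simpa using hzv v hv
    · intro h0
      have hperp : pair B z' v = 0 := h0
      have hhoro : c * pair B z' f ^ 2 ≤ pair B z' z' := by
        have hcc : (0:ℝ) < 1 / c := by positivity
        rw [div_mul_eq_mul_div, lt_div_iff₀ hc, mul_comm] at hz'horo
        linarith
      exact hvf (horo_wall hs hCS hND hff hc hz'pos (by rw [hz'f]; exact hzf)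
        (hVd v hv).1 (hVd v hv).2 hhoro hperp)
  have hpre : IsPreconnected ((fun τ : ℝ => z - (τ * t) • f) '' Set.Icc 0 1) := by
    apply IsPreconnected.image isPreconnected_Icc
    apply Continuous.continuousOn
    exact continuous_const.sub ((continuous_id.mul continuous_const).smul continuous_const)
  have hz0mem : z ∈ (fun τ : ℝ => z - (τ * t) • f) '' Set.Icc 0 1 :=
    ⟨0, by norm_num, by norm_num⟩
  have hsub : (fun τ : ℝ => z - (τ * t) • f) '' Set.Icc 0 1 ⊆ connectedComponentIn SS z :=
    hpre.subset_connectedComponentIn hz0mem hseg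
  rw [← connectedComponentIn_eq hzC] at hsub
  have hfinal : z - t • f ∈ C := hsub ⟨1, by norm_num, by norm_num⟩
  exact ⟨z - t • f, hzO, hfinal⟩

end Chambers

lemma tendsto_pair {ι : Type*} {l : Filter ι} {a b : ι → Fin n → ℝ} {x y : Fin n → ℝ}
    (ha : Filter.Tendsto a l (nhds x)) (hb : Filter.Tendsto b l (nhds y)) :
    Filter.Tendsto (fun k => pair B (a k) (b k)) l (nhds (pair B x y)) := by
  have hai : ∀ i, Filter.Tendsto (fun k => a k i) l (nhds (x i)) := fun i =>
    (continuous_apply i).continuousAt.tendsto.comp ha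
  have hbj : ∀ j, Filter.Tendsto (fun k => b k j) l (nhds (y j)) := fun j =>
    (continuous_apply j).continuousAt.tendsto.comp hb
  unfold pair
  apply tendsto_finset_sum
  intro i _
  apply tendsto_finset_sum
  intro j _
  exact ((hai i).mul tendsto_const_nhds).mul (hbj j)

set_option maxHeartbeats 1000000 in
/-- Walls of bounded negative norm passing near a positive point are bounded. -/
lemma wall_bound (hs : B.IsSymm) (hCS : HCS B) (hND : HND B)
    {p : Fin n → ℝ} (hp : 0 < pair B p p) {c : ℝ} (hc : 0 < c) :
    ∃ r > 0, Metric.closedBall p r ⊆ {y | 0 < pair B y y} ∧ ∃ M : ℝ,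
      ∀ v : Fin n → ℝ, pair B v v ≤ 0 → -pair B v v ≤ c →
        (∃ y ∈ Metric.closedBall p r, pair B y v = 0) → ‖v‖ ≤ M := by
  have hopen : IsOpen {y : Fin n → ℝ | 0 < pair B y y} :=
    isOpen_lt continuous_const continuous_pair_self
  obtain ⟨r, hr0, hrsub⟩ := (Metric.nhds_basis_closedBall.mem_iff).mp
    (hopen.mem_nhds hp)
  refine ⟨r, hr0, hrsub, ?_⟩
  by_contra hM
  push_neg at hM
  have h' : ∀ k : ℕ, ∃ v : Fin n → ℝ, (pair B v v ≤ 0 ∧ -pair B v v ≤ c ∧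
      ∃ y ∈ Metric.closedBall p r, pair B y v = 0) ∧ (k : ℝ) < ‖v‖ := by
    intro k
    obtain ⟨v, h1, h2, h3, h4⟩ := hM k
    exact ⟨v, ⟨h1, h2, h3⟩, h4⟩
  choose v hv hnorm using h'
  choose y hymem hyperp using fun k => (hv k).2.2
  have hvpos : ∀ k, 0 < ‖v k‖ := fun k =>
    lt_of_le_of_lt (Nat.cast_nonneg k) (hnorm k)
  set u : ℕ → (Fin n → ℝ) := fun k => (‖v k‖)⁻¹ • v k with hu
  have husphere : ∀ k, u k ∈ Metric.sphere (0 : Fin n → ℝ) 1 := by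
    intro k
    simp only [Metric.mem_sphere, dist_zero_right, hu, norm_smul, norm_inv, norm_norm]
    exact inv_mul_cancel₀ (hvpos k).ne'
  -- compactness
  have hcomp : IsCompact (Metric.sphere (0 : Fin n → ℝ) 1 ×ˢ Metric.closedBall p r) :=
    (isCompact_sphere 0 1).prod (isCompact_closedBall p r)
  obtain ⟨⟨uL, yL⟩, hlim_mem, φ, hφ, hlim⟩ :=
    hcomp.tendsto_subseq (x := fun k => (u k, y k))
      (fun k => Set.mk_mem_prod (husphere k) (hymem k))
  have hφtop : Filter.Tendsto φ Filter.atTop Filter.atTop := hφ.tendsto_atTop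
  have hulim : Filter.Tendsto (fun k => u (φ k)) Filter.atTop (nhds uL) :=
    (continuous_fst.tendsto _).comp hlim
  have hylim : Filter.Tendsto (fun k => y (φ k)) Filter.atTop (nhds yL) :=
    (continuous_snd.tendsto _).comp hlim
  -- pair uL yL = 0
  have hpuy : pair B uL yL = 0 := by
    have h1 : Filter.Tendsto (fun k => pair B (u (φ k)) (y (φ k))) Filter.atTop
        (nhds (pair B uL yL)) := tendsto_pair hulim hylim
    have h2 : ∀ k, pair B (u (φ k)) (y (φ k)) = 0 := by
      intro k
      rw [hu]
      simp only
      rw [pair_smul_left, pair_comm hs (v (φ k)) (y (φ k)), hyperp (φ k), mul_zero]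
    rw [funext h2] at h1
    exact tendsto_nhds_unique h1 tendsto_const_nhds
  -- pair uL uL = 0
  have hpuu : pair B uL uL = 0 := by
    have h1 : Filter.Tendsto (fun k => pair B (u (φ k)) (u (φ k))) Filter.atTop
        (nhds (pair B uL uL)) := tendsto_pair hulim hulim
    have h2 : Filter.Tendsto (fun k => pair B (u (φ k)) (u (φ k))) Filter.atTop (nhds 0) := by
      have hg : Filter.Tendsto (fun k => c / (φ k : ℝ)) Filter.atTop (nhds 0) :=
        (tendsto_const_div_atTop_nhds_zero_nat c).comp hφtop
      refine squeeze_zero_norm' ?_ hg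
      · have hev : ∀ᶠ k : ℕ in Filter.atTop, 1 ≤ φ k := hφtop.eventually_ge_atTop 1
        filter_upwards [hev] with k hk
        have hpk : (0:ℝ) < (φ k : ℝ) := by exact_mod_cast hk
        have hexp : pair B (u (φ k)) (u (φ k)) = (‖v (φ k)‖)⁻¹ ^ 2 * pair B (v (φ k)) (v (φ k)) := by
          rw [hu]; simp only
          rw [pair_smul_left, pair_smul_right]; ring
        rw [hexp]
        rw [Real.norm_eq_abs, abs_mul, abs_pow, abs_inv, abs_norm]
        have h3 : |pair B (v (φ k)) (v (φ k))| ≤ c := by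
          rw [abs_le]
          constructor
          · linarith [(hv (φ k)).2.1]
          · linarith [(hv (φ k)).1, hc]
        have h4 : ‖v (φ k)‖⁻¹ ≤ (φ k : ℝ)⁻¹ :=
          inv_anti₀ hpk (le_of_lt (hnorm (φ k)))
        have h5 : ‖v (φ k)‖⁻¹ ^ 2 ≤ (φ k : ℝ)⁻¹ := by
          have h6 : ‖v (φ k)‖⁻¹ ≤ 1 := by
            apply inv_le_one_of_one_le₀
            calc (1:ℝ) ≤ (φ k : ℝ) := by exact_mod_cast hk
              _ ≤ ‖v (φ k)‖ := (hnorm (φ k)).le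
          calc ‖v (φ k)‖⁻¹ ^ 2 ≤ ‖v (φ k)‖⁻¹ * 1 := by
                rw [pow_two]
                exact mul_le_mul_of_nonneg_left h6 (inv_nonneg.mpr (norm_nonneg _))
            _ = ‖v (φ k)‖⁻¹ := mul_one _
            _ ≤ (φ k : ℝ)⁻¹ := h4
        calc ‖v (φ k)‖⁻¹ ^ 2 * |pair B (v (φ k)) (v (φ k))|
            ≤ (φ k : ℝ)⁻¹ * c := by
              apply mul_le_mul h5 h3 (abs_nonneg _) (inv_nonneg.mpr hpk.le)
          _ = c / (φ k : ℝ) := by rw [div_eq_mul_inv]; ring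
    exact tendsto_nhds_unique h1 h2
  -- contradiction
  have hyLP : 0 < pair B yL yL := hrsub (Set.mem_prod.mp hlim_mem).2
  have huL0 : uL ≠ 0 := by
    have : ‖uL‖ = 1 := by
      have := (Set.mem_prod.mp hlim_mem).1
      simpa [Metric.mem_sphere, dist_zero_right] using this
    intro h
    rw [h, norm_zero] at this
    norm_num at this
  exact huL0 (claimA hs hCS hND hyLP hpuy hpuu)


lemma pair_single (x : Fin n → ℝ) (j : Fin n) :
    pair B x (Pi.single j (1:ℝ)) = ∑ i, x i * (B i j : ℝ) := by
  unfold pair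
  refine Finset.sum_congr rfl fun i _ => ?_
  rw [Finset.sum_eq_single j]
  · simp
  · intro b _ hbj
    simp [Pi.single_apply, hbj]
  · intro h
    exact absurd (Finset.mem_univ j) h

lemma isLat_single (j : Fin n) : isLat (Pi.single j (1:ℝ)) := by
  intro i
  rcases eq_or_ne i j with h | h
  · subst h; exact ⟨1, by simp⟩
  · exact ⟨0, by simp [Pi.single_apply, h]⟩

lemma pair_eq_sum (x y : Fin n → ℝ) :
    pair B x y = ∑ j, y j * pair B x (Pi.single j (1:ℝ)) := by
  simp only [pair_single]
  unfold pair
  rw [Finset.sum_comm]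
  refine Finset.sum_congr rfl fun j _ => ?_
  rw [Finset.mul_sum]
  refine Finset.sum_congr rfl fun i _ => by ring

lemma finite_dual_ball (hND : HND B) {V : Set (Fin n → ℝ)}
    (hVd : ∀ v ∈ V, ∀ y : Fin n → ℝ, isLat y → ∃ k : ℤ, pair B v y = (k : ℝ))
    (M : ℝ) : {v ∈ V | ‖v‖ ≤ M}.Finite := by
  set F : (Fin n → ℝ) → (Fin n → ℝ) := fun v j => pair B v (Pi.single j (1:ℝ)) with hF
  set K : ℝ := M * (∑ i, ∑ j, |(B i j : ℝ)|) + 1 with hK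
  have hTfin : (Set.pi Set.univ fun _ : Fin n =>
      ((↑) : ℤ → ℝ) '' Set.Icc (-⌈K⌉) ⌈K⌉).Finite :=
    Set.Finite.pi fun _ => (Set.finite_Icc _ _).image _
  apply Set.Finite.of_finite_image (f := F)
  · apply hTfin.subset
    rintro - ⟨v, ⟨hvV, hvn⟩, rfl⟩
    intro j _
    obtain ⟨k, hk⟩ := hVd v hvV (Pi.single j 1) (isLat_single j)
    have hbound : |F v j| ≤ K := by
      rw [hF]
      simp only
      rw [pair_single]
      calc |∑ i, v i * (B i j : ℝ)| ≤ ∑ i, |v i * (B i j : ℝ)| :=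
            Finset.abs_sum_le_sum_abs _ _
        _ ≤ ∑ i, M * |(B i j : ℝ)| := by
            apply Finset.sum_le_sum
            intro i _
            rw [abs_mul]
            apply mul_le_mul_of_nonneg_right _ (abs_nonneg _)
            calc |v i| = ‖v i‖ := (Real.norm_eq_abs _).symm
              _ ≤ ‖v‖ := norm_le_pi_norm v i
              _ ≤ M := hvn
        _ = M * ∑ i, |(B i j : ℝ)| := by rw [Finset.mul_sum]
        _ ≤ M * (∑ i, ∑ j', |(B i j' : ℝ)|) := by
            apply mul_le_mul_of_nonneg_left _ ?_
            · apply Finset.sum_le_sum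
              intro i _
              exact Finset.single_le_sum (fun j' _ => abs_nonneg ((B i j' : ℝ)))
                (Finset.mem_univ j)
            · calc (0:ℝ) ≤ ‖v‖ := norm_nonneg v
                _ ≤ M := hvn
        _ ≤ K := by rw [hK]; linarith
    refine ⟨k, ?_, ?_⟩
    · have hk' : F v j = (k:ℝ) := by rw [hF]; exact hk
      rw [hk'] at hbound
      rw [Set.mem_Icc]
      have h1 : |(k:ℝ)| ≤ (⌈K⌉ : ℝ) := hbound.trans (Int.le_ceil K)
      rw [abs_le] at h1
      constructor
      · exact_mod_cast h1.1
      · exact_mod_cast h1.2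
    · exact hk.symm
  · intro v hv v' hv' hFeq
    have hzero : ∀ y : Fin n → ℝ, pair B (v - v') y = 0 := by
      intro y
      rw [pair_eq_sum]
      apply Finset.sum_eq_zero
      intro j _
      rw [pair_sub_left]
      have : F v j = F v' j := by rw [hFeq]
      rw [hF] at this
      simp only at this
      rw [this]
      ring
    have := hND _ hzero
    exact sub_eq_zero.mp this

/-- Only finitely many chambers meet a compact subset of the positive cone. -/
lemma chambers_finite (hs : B.IsSymm) (hCS : HCS B) (hND : HND B)
    {P V : Set (Fin n → ℝ)} (hPopen : IsOpen P) (hPpos : ∀ p ∈ P, 0 < pair B p p)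
    {c : ℝ} (hc : 0 < c)
    (hVd : ∀ v ∈ V, (∀ y, isLat y → ∃ k : ℤ, pair B v y = (k : ℝ)) ∧
      pair B v v < 0 ∧ -pair B v v < c)
    {J : Set (Fin n → ℝ)} (hJ : IsCompact J) (hJP : J ⊆ P) :
    {D : Set (Fin n → ℝ) | IsChamber B P V D ∧ (D ∩ J).Nonempty}.Finite := by
  classical
  set SS := {y ∈ P | ∀ v ∈ V, pair B y v ≠ 0} with hSSdef
  -- Step 1: radii around points of J
  have hstep1 : ∀ p ∈ J, ∃ ρ > 0, Metric.closedBall p ρ ⊆ P ∧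
      {v ∈ V | ∃ y ∈ Metric.closedBall p ρ, pair B y v = 0}.Finite := by
    intro p hp
    obtain ⟨r, hr0, hrsub, M, hM⟩ := wall_bound hs hCS hND (hPpos p (hJP hp)) hc
    obtain ⟨r₂, hr₂0, hr₂sub⟩ := (Metric.nhds_basis_closedBall.mem_iff).mp
      (hPopen.mem_nhds (hJP hp))
    refine ⟨min r r₂, lt_min hr0 hr₂0, ?_, ?_⟩
    · exact (Metric.closedBall_subset_closedBall (min_le_right r r₂)).trans hr₂sub
    · apply (finite_dual_ball hND (fun v hv => (hVd v hv).1) M).subset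
      rintro v ⟨hvV, y, hy, hyv⟩
      refine ⟨hvV, hM v (hVd v hvV).2.1.le (hVd v hvV).2.2.le
        ⟨y, Metric.closedBall_subset_closedBall (min_le_left r r₂) hy, hyv⟩⟩
  choose! ρ hρ0 hρP hρfin using hstep1
  -- Step 2: finite subcover
  obtain ⟨t, htJ, hcover⟩ := hJ.elim_nhds_subcover (fun p => Metric.ball p (ρ p))
    (fun p hp => Metric.ball_mem_nhds p (hρ0 p hp))
  -- Step 3: reduce to balls
  have hsub : {D : Set (Fin n → ℝ) | IsChamber B P V D ∧ (D ∩ J).Nonempty}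
      ⊆ ⋃ p ∈ t, {D : Set (Fin n → ℝ) | IsChamber B P V D ∧
          (D ∩ Metric.ball p (ρ p)).Nonempty} := by
    rintro D ⟨hch, q, hqD, hqJ⟩
    have := hcover hqJ
    simp only [Set.mem_iUnion] at this ⊢
    obtain ⟨p, hpt, hq⟩ := this
    exact ⟨p, hpt, hch, q, hqD, hq⟩
  apply Set.Finite.subset _ hsub
  apply Set.Finite.biUnion t.finite_toSet
  intro p hpt
  have hpJ : p ∈ J := htJ p hpt
  -- Step 4: chambers meeting a single good ball
  set W := {v ∈ V | ∃ y ∈ Metric.closedBall p (ρ p), pair B y v = 0} with hWdef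
  have hWfin : W.Finite := hρfin p hpJ
  haveI := hWfin.to_subtype
  set Ch := {D : Set (Fin n → ℝ) | IsChamber B P V D ∧
      (D ∩ Metric.ball p (ρ p)).Nonempty} with hCh
  rw [← Set.finite_coe_iff]
  -- selection of a point of the component inside the ball
  have hzex : ∀ D ∈ Ch, ∃ z x₁, x₁ ∈ SS ∧
      D = closure (connectedComponentIn SS x₁) ∩ P ∧
      z ∈ Metric.ball p (ρ p) ∧ z ∈ connectedComponentIn SS x₁ := by
    rintro D ⟨⟨x₁, hx₁P, hx₁v, hDeq⟩, q, hqD, hqball⟩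
    have hqcl : q ∈ closure (connectedComponentIn SS x₁) := by
      rw [hDeq] at hqD
      exact hqD.1
    obtain ⟨z, hzball, hzC⟩ := (mem_closure_iff.mp hqcl) _ Metric.isOpen_ball hqball
    exact ⟨z, x₁, ⟨hx₁P, hx₁v⟩, hDeq, hzball, hzC⟩
  have hz := fun (D : ↥Ch) => hzex D.1 D.2
  choose z x₁ hx₁S hDeq hzball hzC using hz
  refine Finite.of_injective
    (fun D => fun v : ↥W => decide (0 < pair B (z D) v.1)) ?_
  intro D D' heq
  -- the two selected points lie in the same component
  have hzz : connectedComponentIn SS (z D) = connectedComponentIn SS (z D') := by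
    have hsign : ∀ v ∈ W, (0 < pair B (z D) v ↔ 0 < pair B (z D') v) := by
      intro v hv
      have := congrFun heq ⟨v, hv⟩
      simpa [decide_eq_decide] using this
    -- segment from z D to z D'
    set a := z D with ha
    set b := z D' with hb
    have haSS : a ∈ SS := connectedComponentIn_subset _ _ (hzC D)
    have hbSS : b ∈ SS := connectedComponentIn_subset _ _ (hzC D')
    have hseg : ((fun τ : ℝ => (1 - τ) • a + τ • b) '' Set.Icc 0 1) ⊆ SS := by
      rintro - ⟨τ, ⟨hτ0, hτ1⟩, rfl⟩
      have hmemball : (1 - τ) • a + τ • b ∈ Metric.ball p (ρ p) :=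
        (convex_ball p (ρ p)) (hzball D) (hzball D') (by linarith) hτ0 (by ring)
      refine ⟨hρP p hpJ (Metric.ball_subset_closedBall hmemball), fun v hv => ?_⟩
      show pair B ((1 - τ) • a + τ • b) v ≠ 0
      rw [pair_add_left, pair_smul_left, pair_smul_left]
      rcases Classical.em (v ∈ W) with hvW | hvW
      · have hiff := hsign v hvW
        have hav : pair B a v ≠ 0 := haSS.2 v hv
        have hbv : pair B b v ≠ 0 := hbSS.2 v hv
        rcases hav.lt_or_gt with hneg | hpos
        · have hneg' : pair B b v < 0 := by
            rcases hbv.lt_or_gt with h | h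
            · exact h
            · exact absurd (hiff.mpr h) (not_lt.mpr hneg.le)
          have : (1 - τ) * pair B a v + τ * pair B b v < 0 := by
            rcases hτ0.lt_or_eq with h | h
            · nlinarith
            · rw [← h]; simpa using hneg
          linarith
        · have hpos' : 0 < pair B b v := hiff.mp hpos
          have : 0 < (1 - τ) * pair B a v + τ * pair B b v := by
            rcases hτ0.lt_or_eq with h | h
            · nlinarith
            · rw [← h]; simpa using hpos
          linarith
      · -- v not in W : no zero on the closed ball at all
        intro h0
        apply hvW
        refine ⟨hv, (1 - τ) • a + τ • b, Metric.ball_subset_closedBall hmemball, ?_⟩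
        rw [pair_add_left, pair_smul_left, pair_smul_left]
        exact h0
    have hpre : IsPreconnected ((fun τ : ℝ => (1 - τ) • a + τ • b) '' Set.Icc 0 1) := by
      apply IsPreconnected.image isPreconnected_Icc
      apply Continuous.continuousOn
      exact ((continuous_const.sub continuous_id).smul continuous_const).add
        (continuous_id.smul continuous_const)
    have hamem : a ∈ (fun τ : ℝ => (1 - τ) • a + τ • b) '' Set.Icc 0 1 :=
      ⟨0, by norm_num, by norm_num⟩
    have hsub2 : (fun τ : ℝ => (1 - τ) • a + τ • b) '' Set.Icc 0 1
        ⊆ connectedComponentIn SS a :=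
      hpre.subset_connectedComponentIn hamem hseg
    have hbmem : b ∈ connectedComponentIn SS a := hsub2 ⟨1, by norm_num, by norm_num⟩
    exact connectedComponentIn_eq hbmem
  -- conclude equality of chambers
  have hCeq : connectedComponentIn SS (x₁ D) = connectedComponentIn SS (x₁ D') := by
    calc connectedComponentIn SS (x₁ D)
        = connectedComponentIn SS (z D) := connectedComponentIn_eq (hzC D)
      _ = connectedComponentIn SS (z D') := hzz
      _ = connectedComponentIn SS (x₁ D') := (connectedComponentIn_eq (hzC D')).symm
  apply Subtype.ext
  rw [hDeq D, hDeq D', hCeq]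

end Hyp
end Aux

/-- **Corollary: small horoballs meet few chambers.**  Let `L`
be an even hyperbolic lattice with positive cone `P`, `f ∈ L` nonzero
isotropic in the closure of `P`, and let `V` satisfy [V1].  Then there exists
`α > 0` such that for every compact subset `J` of the horosphere
`{x ∈ P : x² = 1, ⟨x,f⟩ = √α}`, only finitely many `V*`-chambers meet the
cone over the union of geodesic rays from points of `J` toward the boundary
point determined by `f`. -/
theorem statement_16 {n : ℕ} (B : Matrix (Fin n) (Fin n) ℤ)
    (hB : IsEvenLat B) (hhyp : IsHyperbolic B)
    (P : Set (Fin n → ℝ)) (hP : IsPosCone B P)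
    (f : Fin n → ℝ) (hfL : isLat f) (hf0 : f ≠ 0) (hff : pair B f f = 0)
    (hfP : f ∈ closure P)
    (V : Set (Fin n → ℝ)) (hV : DualNeg B V) (hV1 : CondV1 B V) :
    ∃ α : ℝ, 0 < α ∧ ∀ J : Set (Fin n → ℝ), IsCompact J →
      J ⊆ {x ∈ P | pair B x x = 1 ∧ pair B x f = Real.sqrt α} →
      {D : Set (Fin n → ℝ) | IsChamber B P V D ∧
        (D ∩ {y | ∃ x ∈ J, ∃ t s : ℝ, 0 ≤ t ∧ 0 < s ∧
          y = s • (x + t • f)}).Nonempty}.Finite := by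
  classical
  obtain ⟨c, hc, hcb⟩ := hV1
  obtain ⟨hsymm, hdet, -⟩ := hB
  have hCS : HCS B := fun x y hx hy => hhyp.2.2.1 x trivial y trivial hx hy
  have hND : HND B := fun x hx => hhyp.2.2.2 x trivial (fun y _ => hx y)
  obtain ⟨x₀, hx₀, hPdef⟩ := hP
  have hPeq0 : P = {y | 0 < pair B y y ∧ 0 < pair B y x₀} := by
    rw [hPdef]; exact posCone_eq hsymm hCS hND hx₀
  have hfx₀ : 0 ≤ pair B f x₀ := by
    have hsubcl : P ⊆ {y | 0 ≤ pair B y x₀} := by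
      rw [hPeq0]; exact fun y hy => hy.2.le
    have hcl : closure P ⊆ {y | 0 ≤ pair B y x₀} :=
      closure_minimal hsubcl (isClosed_le continuous_const (continuous_pair_left x₀))
    exact hcl hfP
  have hPeq : P = {y | 0 < pair B y y ∧ 0 < pair B y f} := by
    rw [hPeq0]; exact posCone_eq_f hsymm hCS hND hx₀ hf0 hff hfx₀
  have hPopen : IsOpen P := by
    rw [hPeq]
    exact (isOpen_lt continuous_const continuous_pair_self).inter
      (isOpen_lt continuous_const (continuous_pair_left f))
  have hPpos : ∀ p ∈ P, 0 < pair B p p := by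
    rw [hPeq]; exact fun p hp => hp.1
  have hPsc : ∀ s : ℝ, 0 < s → ∀ y ∈ P, s • y ∈ P := by
    rw [hPeq]
    intro s hs y hy
    refine ⟨?_, ?_⟩
    · rw [pair_smul_left, pair_smul_right]
      have := hy.1
      positivity
    · rw [pair_smul_left]
      have := hy.2
      positivity
  have hα : (0:ℝ) < 1 / (2 * c) := by positivity
  refine ⟨1 / (2 * c), hα, ?_⟩
  intro J hJ hJsub
  have hJP : J ⊆ P := fun x hx => (hJsub hx).1
  have hfin := chambers_finite hsymm hCS hND hPopen hPpos hc
    (fun v hv => ⟨fun y hy => (hV v hv).1.2 y hy, (hV v hv).2, hcb v hv⟩) hJ hJP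
  apply hfin.subset
  rintro D ⟨hch, y₀, hy₀D, hy₀cone⟩
  refine ⟨hch, ?_⟩
  obtain ⟨x, hxJ, t, s, ht, hspos, hy₀eq⟩ := hy₀cone
  obtain ⟨x₁, hx₁P, hx₁v, hDeq⟩ := hch
  have h1 : y₀ ∈ closure (connectedComponentIn
      {y ∈ P | ∀ v ∈ V, pair B y v ≠ 0} x₁) := by
    rw [hDeq] at hy₀D
    exact hy₀D.1
  have h2 : x + t • f ∈ closure (connectedComponentIn
      {y ∈ P | ∀ v ∈ V, pair B y v ≠ 0} x₁) := by
    have h3 := smul_mem_closure_comp (V := V) hPsc (inv_pos.mpr hspos) h1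
    rw [hy₀eq, inv_smul_smul₀ hspos.ne'] at h3
    exact h3
  obtain ⟨hxP, hx2, hxf⟩ := hJsub hxJ
  have hxf2 : pair B x f ^ 2 = 1 / (2 * c) := by
    rw [hxf]; exact Real.sq_sqrt hα.le
  have hxf0 : 0 < pair B x f := by
    rw [hxf]; exact Real.sqrt_pos.mpr hα
  have h4 := ray_into_closure hsymm hCS hND hff hc
    (fun v hv => ⟨(hV v hv).1.2 f hfL, hcb v hv⟩) hPeq ht hx2 hxf2 hxf0 h2
  exact ⟨x, by rw [hDeq]; exact ⟨h4, hxP⟩, hxJ⟩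

end K3Aut
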